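/- Let K : ℝ → ℝ and g : ℝ → ℝ be functions integrable on every compact subinterval of [1,∞), with K(τ) ≤ 1 and g(τ) ≥ 0 for all τ ≥ 1. Then for every t ≥ 1, ∫₁ᵗ (1 − K(τ)·exp(−∫_τ^t g(s) ds)) dτ ≤ ∫₁ᵗ (s − 1)·g(s) ds + ∫₁ᵗ (1 − K(τ)) dτ. -/

import Mathlib

/-!
Write `1 - K e = (1 - e) + (1 - K) e` with `e = exp (-∫_τ^t g) ∈ (0, 1]`; since `1 - e ≤ ∫_τ^t g`
and `K ≤ 1`, the integrand is at most `∫_τ^t g + (1 - K τ)`. Integrating the tail `∫_τ^t g` over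
`τ ∈ [1, t]` gives `∫_1^t (s - 1) g(s) ds`, here by integration by parts against the absolutely
continuous primitive of `g`.
-/

open MeasureTheory intervalIntegral Real

theorem integral_integral_eq_integral_sub_mul {g : ℝ → ℝ} {a b : ℝ}
    (hg : IntervalIntegrable g volume a b) :
    ∫ τ in a..b, ∫ s in τ..b, g s = ∫ s in a..b, (s - a) * g s := by
  set F : ℝ → ℝ := fun x ↦ ∫ v in a..x, g v
  have hF : AbsolutelyContinuousOnInterval F a b :=
    hg.absolutelyContinuousOnInterval_intervalIntegral Set.left_mem_uIcc
  have hlin : AbsolutelyContinuousOnInterval (fun s ↦ s - a) a b :=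
    (LipschitzWith.id.sub (LipschitzWith.const a)).lipschitzOnWith.absolutelyContinuousOnInterval
  have htail : Set.EqOn (fun τ ↦ ∫ s in τ..b, g s) (fun τ ↦ F b - F τ) (Set.uIcc a b) :=
    fun τ hτ ↦ (integral_interval_sub_left hg (hg.mono_set (Set.uIcc_subset_uIcc_left hτ))).symm
  have hderiv : ∀ᵐ s, s ∈ Set.uIoc a b → (s - a) * g s = (s - a) * deriv F s := by
    filter_upwards [hg.ae_hasDerivAt_integral] with s hs hs'
    rw [(hs (Set.uIoc_subset_uIcc hs') a Set.left_mem_uIcc).deriv]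
  calc ∫ τ in a..b, ∫ s in τ..b, g s
      = (b - a) * F b - ∫ τ in a..b, F τ := by
        rw [integral_congr htail,
          integral_sub intervalIntegrable_const hF.continuousOn.intervalIntegrable]
        simp
    _ = ∫ s in a..b, (s - a) * g s := by
        rw [integral_congr_ae hderiv, hlin.integral_mul_deriv_eq_deriv_mul hF]
        simp [F]

theorem one_sub_mul_exp_neg_le {k x : ℝ} (hk : k ≤ 1) (hx : 0 ≤ x) :
    1 - k * exp (-x) ≤ x + (1 - k) := by
  have hexp_le_one : exp (-x) ≤ 1 := exp_le_one_iff.mpr (neg_nonpos.mpr hx)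
  have hone_sub_exp : 1 - exp (-x) ≤ x := by linarith [add_one_le_exp (-x)]
  nlinarith [mul_le_mul_of_nonneg_left hexp_le_one (sub_nonneg.mpr hk)]

/-- the key upper bound in the proof of the finiteness of the
asphericity mass. -/
theorem asphericity_mass_upper_bound
    (K g : ℝ → ℝ)
    (hKint : ∀ a b : ℝ, 1 ≤ a → a ≤ b → IntegrableOn K (Set.Icc a b))
    (hgint : ∀ a b : ℝ, 1 ≤ a → a ≤ b → IntegrableOn g (Set.Icc a b))
    (hK : ∀ τ : ℝ, 1 ≤ τ → K τ ≤ 1)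
    (hg : ∀ τ : ℝ, 1 ≤ τ → 0 ≤ g τ) :
    ∀ t : ℝ, 1 ≤ t →
      (∫ τ in (1:ℝ)..t, (1 - K τ * Real.exp (-∫ s in τ..t, g s)))
        ≤ (∫ s in (1:ℝ)..t, (s - 1) * g s) + ∫ τ in (1:ℝ)..t, (1 - K τ) := by
  intro t ht
  have hKt := hKint 1 t le_rfl ht
  have hgt := hgint 1 t le_rfl ht
  rw [← Set.uIcc_of_le ht] at hKt hgt
  have hKi : IntervalIntegrable (fun τ ↦ 1 - K τ) volume 1 t :=
    intervalIntegrable_const.sub hKt.intervalIntegrable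
  have htail : ContinuousOn (fun τ ↦ ∫ s in τ..t, g s) (Set.uIcc 1 t) :=
    continuousOn_primitive_interval_left hgt
  have htail_nonneg : ∀ τ ∈ Set.Icc 1 t, 0 ≤ ∫ s in τ..t, g s := fun τ hτ ↦
    integral_nonneg hτ.2 fun s hs ↦ hg s (hτ.1.trans hs.1)
  calc (∫ τ in (1:ℝ)..t, (1 - K τ * exp (-∫ s in τ..t, g s)))
      ≤ ∫ τ in (1:ℝ)..t, ((∫ s in τ..t, g s) + (1 - K τ)) :=
        integral_mono_on ht
          (intervalIntegrable_const.sub <| hKt.intervalIntegrable.mul_continuousOn <|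
            continuous_exp.comp_continuousOn htail.neg)
          (htail.intervalIntegrable.add hKi)
          fun τ hτ ↦ one_sub_mul_exp_neg_le (hK τ hτ.1) (htail_nonneg τ hτ)
    _ = (∫ s in (1:ℝ)..t, (s - 1) * g s) + ∫ τ in (1:ℝ)..t, (1 - K τ) := by
        rw [integral_add htail.intervalIntegrable hKi,
          integral_integral_eq_integral_sub_mul hgt.intervalIntegrable]
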